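/- arXiv:2510.16638 — 7 statements merged into one kernel-verified Lean document; each statement's English description precedes it below -/
import Mathlib

section
/- For any two points x, y, the function x*y : S → K is again a point, i.e. (x*y)(0) = 1 and (x*y)(u+v) = (x*y)(u)·(x*y)(v) for all u, v ∈ S. (This expresses that the root-monoid comultiplication of Theorem 1 is an algebra homomorphism K[S] → K[S] ⊗ K[S], i.e. that the product of two K-points of the root monoid is again a K-point.) -/
open Finset

def pairZ {n : ℕ} (v u : Fin n → ℤ) : ℤ := ∑ i, v i * u i

def InS {n m : ℕ} (q : Fin m → Fin n → ℤ) (u : Fin n → ℤ) : Prop :=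
  ∀ j, 0 ≤ pairZ (q j) u

def IsPoint {n m : ℕ} {K : Type*} [Field K] (q : Fin m → Fin n → ℤ)
    (x : (Fin n → ℤ) → K) : Prop :=
  x 0 = 1 ∧ ∀ u v : Fin n → ℤ, InS q u → InS q v → x (u + v) = x u * x v

def Compatible {n m k : ℕ} (hkm : k ≤ m) (q : Fin m → Fin n → ℤ)
    (e : Fin k → Fin n → ℤ) : Prop :=
  (∀ r s : Fin k, pairZ (q (Fin.castLE hkm s)) (e r) = if r = s then -1 else 0) ∧
  (∀ (r : Fin k) (j : Fin m), k ≤ (j : ℕ) → 0 ≤ pairZ (q j) (e r))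

noncomputable def rmul {n m k : ℕ} {K : Type*} [Field K] (hkm : k ≤ m)
    (q : Fin m → Fin n → ℤ) (e1 e2 : Fin k → Fin n → ℤ)
    (x y : (Fin n → ℤ) → K) : (Fin n → ℤ) → K :=
  fun u =>
    ∑ i ∈ Fintype.piFinset (fun r : Fin k =>
        Finset.range ((pairZ (q (Fin.castLE hkm r)) u).toNat + 1)),
      (∏ r : Fin k, ((pairZ (q (Fin.castLE hkm r)) u).toNat.choose (i r) : K)) *
        x (u + ∑ r : Fin k, (i r : ℤ) • e2 r) *
        y (u + ∑ r : Fin k, (pairZ (q (Fin.castLE hkm r)) u - (i r : ℤ)) • e1 r)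

noncomputable def xtau {n m k : ℕ} (K : Type*) [Field K] (hkm : k ≤ m)
    (q : Fin m → Fin n → ℤ) : (Fin n → ℤ) → K :=
  fun u => if ∀ r : Fin k, pairZ (q (Fin.castLE hkm r)) u = 0 then 1 else 0

/-!
In `K[ℤⁿ × ℤⁿ]` put `Δ u := χ^(u,u) ∏ r, (χ^(e2 r, 0) + χ^(0, e1 r)) ^ ⟨p_r, u⟩`. For `u, v ∈ S`
the exponents add, so `Δ (u + v) = Δ u * Δ v`, and the binomial theorem expands `Δ u` into
exactly the sum defining `(x * y) u`, with all monomials in `S × S` by compatibility of the roots.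
Hence `(x * y) u` is the image of `Δ u` under the linear functional `χ^(a,b) ↦ x a * y b`, which
is not multiplicative on all of `K[ℤⁿ × ℤⁿ]` but is on elements supported in `S × S`.
-/

open scoped AddMonoidAlgebra

lemma pairZ_add {n : ℕ} (v u w : Fin n → ℤ) : pairZ v (u + w) = pairZ v u + pairZ v w :=
  dotProduct_add v u w

lemma pairZ_zero {n : ℕ} (v : Fin n → ℤ) : pairZ v 0 = 0 :=
  dotProduct_zero v

lemma pairZ_sum_smul {n : ℕ} {ι : Type*} [Fintype ι] (v : Fin n → ℤ) (c : ι → ℤ)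
    (f : ι → Fin n → ℤ) : pairZ v (∑ r, c r • f r) = ∑ r, c r * pairZ v (f r) := by
  simp only [pairZ, ← dotProduct.eq_def, dotProduct_sum, dotProduct_smul, smul_eq_mul]

lemma inS_zero {n m : ℕ} (q : Fin m → Fin n → ℤ) : InS q 0 := fun j => (pairZ_zero (q j)).ge

lemma InS.add {n m : ℕ} {q : Fin m → Fin n → ℤ} {u v : Fin n → ℤ} (hu : InS q u)
    (hv : InS q v) : InS q (u + v) := fun j => by rw [pairZ_add]; exact add_nonneg (hu j) (hv j)

section EvalOnSupported

variable {R G : Type*} [CommSemiring R]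

noncomputable def evalLinear (φ : G → R) : R[G] →ₗ[R] R :=
  Finsupp.linearCombination R φ ∘ₗ (AddMonoidAlgebra.coeffLinearEquiv R).toLinearMap

@[simp]
lemma evalLinear_single (φ : G → R) (g : G) (c : R) :
    evalLinear φ (AddMonoidAlgebra.single g c) = c * φ g := by
  simp [evalLinear, AddMonoidAlgebra.coeffLinearEquiv]

lemma evalLinear_mul_of_mem_supported [AddCommMonoid G] {φ : G → R} {M : Set G}
    (hφ : ∀ a ∈ M, ∀ b ∈ M, φ (a + b) = φ a * φ b) {f g : R[G]}
    (hf : f ∈ AddMonoidAlgebra.supported R R M) (hg : g ∈ AddMonoidAlgebra.supported R R M) :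
    evalLinear φ (f * g) = evalLinear φ f * evalLinear φ g := by
  rw [AddMonoidAlgebra.supported_eq_span_single] at hf hg
  induction hf using Submodule.span_induction with
  | mem f hf =>
    obtain ⟨a, ha, rfl⟩ := hf
    induction hg using Submodule.span_induction with
    | mem g hg =>
      obtain ⟨b, hb, rfl⟩ := hg
      simp [AddMonoidAlgebra.single_mul_single, hφ a ha b hb]
    | zero => simp
    | add g g' _ _ h h' => simp [mul_add, h, h']
    | smul c g _ h => simp only [mul_smul_comm, map_smul, h, smul_eq_mul]; ring
  | zero => simp
  | add f f' _ _ h h' => simp [add_mul, h, h']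
  | smul c f _ h => simp only [smul_mul_assoc, map_smul, h, smul_eq_mul]; ring

end EvalOnSupported

section Compatible

variable {n m k : ℕ} {hkm : k ≤ m} {q : Fin m → Fin n → ℤ} {e : Fin k → Fin n → ℤ}

lemma Compatible.pairZ_castLE_sum_smul (he : Compatible hkm q e) (c : Fin k → ℤ) (s : Fin k) :
    pairZ (q (Fin.castLE hkm s)) (∑ r, c r • e r) = -c s := by
  simp only [pairZ_sum_smul, he.1, mul_ite, mul_neg_one, mul_zero, Finset.sum_ite_eq',
    Finset.mem_univ, if_true]

lemma Compatible.inS_add_sum_smul (he : Compatible hkm q e) {u : Fin n → ℤ} (hu : InS q u)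
    {c : Fin k → ℤ} (hc0 : ∀ r, 0 ≤ c r)
    (hc : ∀ r, c r ≤ pairZ (q (Fin.castLE hkm r)) u) : InS q (u + ∑ r, c r • e r) := by
  intro j
  rw [pairZ_add]
  by_cases hj : (j : ℕ) < k
  · have hjk : Fin.castLE hkm ⟨j, hj⟩ = j := rfl
    rw [← hjk, he.pairZ_castLE_sum_smul]
    linarith [hc ⟨j, hj⟩]
  · have : 0 ≤ pairZ (q j) (∑ r, c r • e r) := by
      rw [pairZ_sum_smul]
      exact Finset.sum_nonneg fun r _ => mul_nonneg (hc0 r) (he.2 r j (not_lt.mp hj))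
    linarith [hu j]

end Compatible

section RootComul

variable {n m k : ℕ} (K : Type*) [Field K] (hkm : k ≤ m) (q : Fin m → Fin n → ℤ)
  (e1 e2 : Fin k → Fin n → ℤ)

/-- The comultiplication `χ^u ↦ χ^u ⊗ χ^u ∏ r, (1 ⊗ χ^(e1 r) + χ^(e2 r) ⊗ 1) ^ ⟨p_r, u⟩`
of Theorem 1, written in `K[ℤⁿ × ℤⁿ] ≅ K[ℤⁿ] ⊗ K[ℤⁿ]`. -/
noncomputable def rootComul (u : Fin n → ℤ) : K[(Fin n → ℤ) × (Fin n → ℤ)] :=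
  .single (u, u) 1 * ∏ r : Fin k,
    (.single (e2 r, 0) 1 + .single (0, e1 r) 1) ^ (pairZ (q (Fin.castLE hkm r)) u).toNat

lemma rootComul_eq_sum {u : Fin n → ℤ} (hu : ∀ r, 0 ≤ pairZ (q (Fin.castLE hkm r)) u) :
    rootComul K hkm q e1 e2 u =
      ∑ i ∈ Fintype.piFinset (fun r : Fin k =>
          Finset.range ((pairZ (q (Fin.castLE hkm r)) u).toNat + 1)),
        .single (u + ∑ r, (i r : ℤ) • e2 r,
            u + ∑ r, (pairZ (q (Fin.castLE hkm r)) u - (i r : ℤ)) • e1 r)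
          (∏ r, ((pairZ (q (Fin.castLE hkm r)) u).toNat.choose (i r) : K)) := by
  simp only [rootComul, add_pow, Finset.prod_univ_sum, Finset.mul_sum]
  refine Finset.sum_congr rfl fun i hi => ?_
  simp only [AddMonoidAlgebra.single_pow, AddMonoidAlgebra.natCast_def,
    AddMonoidAlgebra.single_mul_single, AddMonoidAlgebra.prod_single]
  have hi' : ∀ r, i r ≤ (pairZ (q (Fin.castLE hkm r)) u).toNat := fun r =>
    Nat.lt_succ_iff.mp (Finset.mem_range.mp (Fintype.mem_piFinset.mp hi r))
  congr 1
  · ext : 1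
    · simp [Prod.fst_sum]
    · simp only [Prod.snd_add, Prod.snd_sum, Prod.smul_snd, add_zero, smul_zero, zero_add]
      congr 1
      refine Finset.sum_congr rfl fun r _ => ?_
      rw [← natCast_zsmul, Nat.cast_sub (hi' r), Int.toNat_of_nonneg (hu r)]
  · simp

lemma rootComul_add {u v : Fin n → ℤ} (hu : ∀ r, 0 ≤ pairZ (q (Fin.castLE hkm r)) u)
    (hv : ∀ r, 0 ≤ pairZ (q (Fin.castLE hkm r)) v) :
    rootComul K hkm q e1 e2 (u + v) = rootComul K hkm q e1 e2 u * rootComul K hkm q e1 e2 v := by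
  have hexp : ∀ r, (pairZ (q (Fin.castLE hkm r)) (u + v)).toNat =
      (pairZ (q (Fin.castLE hkm r)) u).toNat + (pairZ (q (Fin.castLE hkm r)) v).toNat := fun r => by
    rw [pairZ_add, Int.toNat_add (hu r) (hv r)]
  have hdiag : AddMonoidAlgebra.single (u + v, u + v) (1 : K) =
      .single (u, u) 1 * .single (v, v) 1 := by
    rw [AddMonoidAlgebra.single_mul_single, Prod.mk_add_mk, mul_one]
  simp only [rootComul, hexp, pow_add, Finset.prod_mul_distrib, hdiag]
  ring

lemma rootComul_zero : rootComul K hkm q e1 e2 0 = 1 := by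
  simp [rootComul, pairZ_zero, AddMonoidAlgebra.one_def, Prod.mk_zero_zero]

end RootComul

section PointProduct

variable {n m k : ℕ} {K : Type*} [Field K] {hkm : k ≤ m} {q : Fin m → Fin n → ℤ}
  {e1 e2 : Fin k → Fin n → ℤ}

lemma rootComul_mem_supported (he1 : Compatible hkm q e1) (he2 : Compatible hkm q e2)
    {u : Fin n → ℤ} (hu : InS q u) :
    rootComul K hkm q e1 e2 u ∈
      AddMonoidAlgebra.supported K K ({u | InS q u} ×ˢ {u | InS q u}) := by
  rw [rootComul_eq_sum K hkm q e1 e2 fun r => hu _]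
  refine Submodule.sum_mem _ fun i hi => ?_
  have hi' : ∀ r, (i r : ℤ) ≤ pairZ (q (Fin.castLE hkm r)) u := fun r => by
    have := Finset.mem_range.mp (Fintype.mem_piFinset.mp hi r)
    have := hu (Fin.castLE hkm r)
    omega
  rw [AddMonoidAlgebra.mem_supported, AddMonoidAlgebra.coeff_single]
  refine (Finset.coe_subset.mpr Finsupp.support_single_subset).trans ?_
  rw [Finset.coe_singleton, Set.singleton_subset_iff]
  constructor
  · exact he2.inS_add_sum_smul hu (fun r => Int.natCast_nonneg _) hi'
  · exact he1.inS_add_sum_smul hu (fun r => sub_nonneg.mpr (hi' r)) fun r => by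
      linarith [Int.natCast_nonneg (i r)]

lemma rmul_eq_evalLinear (x y : (Fin n → ℤ) → K) {u : Fin n → ℤ} (hu : InS q u) :
    rmul hkm q e1 e2 x y u =
      evalLinear (fun g => x g.1 * y g.2) (rootComul K hkm q e1 e2 u) := by
  rw [rootComul_eq_sum K hkm q e1 e2 fun r => hu _, map_sum]
  simp [rmul, mul_assoc]

end PointProduct

theorem statement_1_general {n m k : ℕ} {K : Type*} [Field K]
    (hkm : k ≤ m)
    (q : Fin m → Fin n → ℤ) (e1 e2 : Fin k → Fin n → ℤ)
    (he1 : Compatible hkm q e1) (he2 : Compatible hkm q e2)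
    (x y : (Fin n → ℤ) → K) (hx : IsPoint q x) (hy : IsPoint q y) :
    IsPoint q (rmul hkm q e1 e2 x y) := by
  have hxy : ∀ a ∈ {u | InS q u} ×ˢ {u | InS q u}, ∀ b ∈ {u | InS q u} ×ˢ {u | InS q u},
      x (a + b).1 * y (a + b).2 = x a.1 * y a.2 * (x b.1 * y b.2) := fun a ha b hb => by
    rw [Prod.fst_add, Prod.snd_add, hx.2 _ _ ha.1 hb.1, hy.2 _ _ ha.2 hb.2]
    ring
  refine ⟨?_, fun u v hu hv => ?_⟩
  · rw [rmul_eq_evalLinear x y (inS_zero q), rootComul_zero, AddMonoidAlgebra.one_def,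
      evalLinear_single]
    simp [hx.1, hy.1]
  · rw [rmul_eq_evalLinear x y (hu.add hv), rmul_eq_evalLinear x y hu, rmul_eq_evalLinear x y hv,
      rootComul_add K hkm q e1 e2 (fun r => hu _) (fun r => hv _)]
    exact evalLinear_mul_of_mem_supported hxy (rootComul_mem_supported he1 he2 hu)
      (rootComul_mem_supported he1 he2 hv)

theorem statement_1 {n m k : ℕ} {K : Type*} [Field K] [CharZero K]
    (hn : 1 ≤ n) (hk : 1 ≤ k) (hkm : k ≤ m)
    (q : Fin m → Fin n → ℤ) (e1 e2 : Fin k → Fin n → ℤ)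
    (he1 : Compatible hkm q e1) (he2 : Compatible hkm q e2)
    (x y : (Fin n → ℤ) → K) (hx : IsPoint q x) (hy : IsPoint q y) :
    IsPoint q (rmul hkm q e1 e2 x y) :=
  statement_1_general hkm q e1 e2 he1 he2 x y hx hy
end

section
/- The operation * on points is associative: for all points x, y, z one has (x*y)*z = x*(y*z). (This is the associativity part of Theorem 1: the root-monoid comultiplication defines an associative multiplication on the toric variety X_σ.) -/
/-!
Write `a = (⟨p_r, u⟩)_r` and `c • e = ∑ c_r e^{(r)}`. Since `⟨p_s, u + c • e⟩ = a_s - c_s`, both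
`((x * y) * z)(u)` and `(x * (y * z))(u)` expand into double sums over multi-indices `i ≤ l ≤ a`
whose terms are `x (u + l • e₂) y (u + i • e₂ + (a - l) • e₁) z (u + (a - i) • e₁)`, with
coefficients `C(a, i) C(a - i, l - i)` and `C(a, l) C(l, i)` respectively; these agree.
-/

open Finset

lemma sum_Iic_sum_Iic_tsub {α M : Type*} [AddCommMonoid M] [AddCommMonoid α] [PartialOrder α]
    [CanonicallyOrderedAdd α] [Sub α] [OrderedSub α] [AddLeftReflectLE α]
    [LocallyFiniteOrderBot α] (a : α) (f : α → α → M) :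
    ∑ i ∈ Iic a, ∑ j ∈ Iic (a - i), f i j = ∑ l ∈ Iic a, ∑ i ∈ Iic l, f i (l - i) := by
  rw [sum_sigma', sum_sigma']
  refine sum_nbij' (fun p => ⟨p.1 + p.2, p.1⟩) (fun p => ⟨p.2, p.1 - p.2⟩) ?_ ?_ ?_ ?_ ?_
  · rintro ⟨i, j⟩ hij
    simp only [mem_sigma, mem_Iic] at hij ⊢
    exact ⟨(le_tsub_iff_left hij.1).1 hij.2, le_self_add⟩
  · rintro ⟨l, i⟩ hli
    simp only [mem_sigma, mem_Iic] at hli ⊢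
    exact ⟨hli.2.trans hli.1, tsub_le_tsub_right hli.1 i⟩
  · rintro ⟨i, j⟩ -
    simp
  · rintro ⟨l, i⟩ hli
    simp only [mem_sigma, mem_Iic] at hli
    simp [add_tsub_cancel_of_le hli.2]
  · rintro ⟨i, j⟩ -
    simp

section MultiIndex

variable {ι : Type*} [Fintype ι]

lemma piFinset_range_succ_eq_Iic [DecidableEq ι] (a : ι → ℕ) :
    Fintype.piFinset (fun r => range (a r + 1)) = Iic a := by
  ext i
  simp [Pi.le_def]

def piChoose (a i : ι → ℕ) : ℕ := ∏ r, (a r).choose (i r)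

lemma piChoose_mul_piChoose {a l i : ι → ℕ} (hil : i ≤ l) :
    piChoose a l * piChoose l i = piChoose a i * piChoose (a - i) (l - i) := by
  simp only [piChoose, ← prod_mul_distrib, Pi.sub_apply]
  exact prod_congr rfl fun r _ => Nat.choose_mul (hil r)

end MultiIndex

section RootShift

lemma pairZ_eq_dotProduct {n : ℕ} (v u : Fin n → ℤ) : pairZ v u = v ⬝ᵥ u := rfl

variable {n m k : ℕ} {hkm : k ≤ m} {q : Fin m → Fin n → ℤ}

def rootShift (e : Fin k → Fin n → ℤ) (c : Fin k → ℕ) : Fin n → ℤ := ∑ r, (c r : ℤ) • e r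

lemma rootShift_add (e : Fin k → Fin n → ℤ) (c d : Fin k → ℕ) :
    rootShift e (c + d) = rootShift e c + rootShift e d := by
  simp [rootShift, add_smul, sum_add_distrib]

lemma pairZ_add_rootShift {e : Fin k → Fin n → ℤ} (he : Compatible hkm q e)
    (u : Fin n → ℤ) (c : Fin k → ℕ) (s : Fin k) :
    pairZ (q (Fin.castLE hkm s)) (u + rootShift e c) = pairZ (q (Fin.castLE hkm s)) u - c s := by
  simp only [pairZ_eq_dotProduct, Compatible, rootShift, dotProduct_add, dotProduct_sum,
    dotProduct_smul] at he ⊢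
  simp [he.1, sub_eq_add_neg]

end RootShift

section Comultiplication

variable {n m k : ℕ} {K : Type*} [Field K] {hkm : k ≤ m} {q : Fin m → Fin n → ℤ}
  {e1 e2 : Fin k → Fin n → ℤ}

lemma rmul_apply_of_pairZ_eq (x y : (Fin n → ℤ) → K) {u : Fin n → ℤ} {a : Fin k → ℕ}
    (ha : ∀ r, pairZ (q (Fin.castLE hkm r)) u = a r) :
    rmul hkm q e1 e2 x y u = ∑ i ∈ Iic a,
      (piChoose a i : K) * x (u + rootShift e2 i) * y (u + rootShift e1 (a - i)) := by
  simp only [rmul, ha, Int.toNat_natCast, piFinset_range_succ_eq_Iic]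
  refine sum_congr rfl fun i hi => ?_
  have hsub : ∀ r, (a r : ℤ) - i r = ((a - i) r : ℕ) := fun r =>
    (Nat.cast_sub (mem_Iic.1 hi r)).symm
  simp only [piChoose, Nat.cast_prod, rootShift, hsub]

lemma rmul_rmul_apply (he2 : Compatible hkm q e2)
    (x y z : (Fin n → ℤ) → K) {u : Fin n → ℤ} {a : Fin k → ℕ}
    (ha : ∀ r, pairZ (q (Fin.castLE hkm r)) u = a r) :
    rmul hkm q e1 e2 (rmul hkm q e1 e2 x y) z u = ∑ l ∈ Iic a, ∑ i ∈ Iic l,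
      (piChoose a i * piChoose (a - i) (l - i) : K) * x (u + rootShift e2 l) *
        y (u + rootShift e2 i + rootShift e1 (a - l)) * z (u + rootShift e1 (a - i)) := by
  rw [rmul_apply_of_pairZ_eq _ _ ha]
  have hinner : ∀ i ∈ Iic a, rmul hkm q e1 e2 x y (u + rootShift e2 i) =
      ∑ j ∈ Iic (a - i), (piChoose (a - i) j : K) * x (u + rootShift e2 i + rootShift e2 j) *
        y (u + rootShift e2 i + rootShift e1 (a - i - j)) := fun i hi =>
    rmul_apply_of_pairZ_eq _ _ fun r => by
      rw [pairZ_add_rootShift he2, ha, Pi.sub_apply, Nat.cast_sub (mem_Iic.1 hi r)]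
  rw [sum_congr rfl fun i hi => by rw [hinner i hi, mul_sum, sum_mul],
    sum_Iic_sum_Iic_tsub]
  refine sum_congr rfl fun l hl => sum_congr rfl fun i hi => ?_
  have hil : i ≤ l := mem_Iic.1 hi
  rw [add_assoc, ← rootShift_add, add_tsub_cancel_of_le hil,
    tsub_tsub_tsub_cancel_right hil]
  ring

lemma rmul_apply_rmul (he1 : Compatible hkm q e1)
    (x y z : (Fin n → ℤ) → K) {u : Fin n → ℤ} {a : Fin k → ℕ}
    (ha : ∀ r, pairZ (q (Fin.castLE hkm r)) u = a r) :
    rmul hkm q e1 e2 x (rmul hkm q e1 e2 y z) u = ∑ l ∈ Iic a, ∑ i ∈ Iic l,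
      (piChoose a l * piChoose l i : K) * x (u + rootShift e2 l) *
        y (u + rootShift e1 (a - l) + rootShift e2 i) * z (u + rootShift e1 (a - i)) := by
  rw [rmul_apply_of_pairZ_eq _ _ ha]
  refine sum_congr rfl fun l hl => ?_
  have hla : l ≤ a := mem_Iic.1 hl
  have hpair : ∀ r, pairZ (q (Fin.castLE hkm r)) (u + rootShift e1 (a - l)) = l r := fun r => by
    rw [pairZ_add_rootShift he1, ha, Pi.sub_apply, Nat.cast_sub (hla r), sub_sub_cancel]
  rw [rmul_apply_of_pairZ_eq _ _ hpair, mul_sum]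
  refine sum_congr rfl fun i hi => ?_
  rw [add_assoc u (rootShift e1 (a - l)) (rootShift e1 (l - i)), ← rootShift_add,
    tsub_add_tsub_cancel hla (mem_Iic.1 hi)]
  ring

end Comultiplication

theorem statement_2_general {n m k : ℕ} {K : Type*} [Field K]
    (hkm : k ≤ m)
    (q : Fin m → Fin n → ℤ) (e1 e2 : Fin k → Fin n → ℤ)
    (he1 : Compatible hkm q e1) (he2 : Compatible hkm q e2)
    (x y z : (Fin n → ℤ) → K) :
    ∀ u : Fin n → ℤ, InS q u →
      rmul hkm q e1 e2 (rmul hkm q e1 e2 x y) z u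
        = rmul hkm q e1 e2 x (rmul hkm q e1 e2 y z) u := by
  intro u hu
  obtain ⟨a, ha⟩ : ∃ a : Fin k → ℕ, ∀ r, pairZ (q (Fin.castLE hkm r)) u = a r :=
    ⟨fun r => (pairZ (q (Fin.castLE hkm r)) u).toNat, fun r => (Int.toNat_of_nonneg (hu _)).symm⟩
  rw [rmul_rmul_apply he2 x y z ha, rmul_apply_rmul he1 x y z ha]
  refine sum_congr rfl fun l _ => sum_congr rfl fun i hi => ?_
  rw [← Nat.cast_mul, ← piChoose_mul_piChoose (mem_Iic.1 hi), Nat.cast_mul, add_right_comm]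

theorem statement_2 {n m k : ℕ} {K : Type*} [Field K] [CharZero K]
    (hn : 1 ≤ n) (hk : 1 ≤ k) (hkm : k ≤ m)
    (q : Fin m → Fin n → ℤ) (e1 e2 : Fin k → Fin n → ℤ)
    (he1 : Compatible hkm q e1) (he2 : Compatible hkm q e2)
    (x y z : (Fin n → ℤ) → K) (hx : IsPoint q x) (hy : IsPoint q y) (hz : IsPoint q z) :
    ∀ u : Fin n → ℤ, InS q u →
      rmul hkm q e1 e2 (rmul hkm q e1 e2 x y) z u
        = rmul hkm q e1 e2 x (rmul hkm q e1 e2 y z) u :=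
  statement_2_general hkm q e1 e2 he1 he2 x y z
end

section
/- Assume there exists v ∈ ℤ^n with ⟨p_r, v⟩ = 0 for all r ≤ k and ⟨q_j, v⟩ > 0 for all j > k (i.e. τ is a face of σ). Then a point x is invertible with respect to * (there exists a point y with x*y = y*x = x_τ) if and only if x(u) ≠ 0 for every u ∈ S with ⟨p_r, u⟩ = 0 for all r = 1, …, k. (This is the statement of Theorem 1 that the group of invertible elements of the root monoid X_σ coincides with the open toric subvariety X_τ.) -/
open Finset

lemma Finset.sum_range_neg_one_pow_mul_choose {R : Type*} [Ring R] (d : ℕ) :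
    ∑ j ∈ range (d + 1), (-1) ^ j * (d.choose j : R) = if d = 0 then 1 else 0 := by
  exact_mod_cast congrArg (Int.cast : ℤ → R) (Int.alternating_sum_range_choose (n := d))

section

variable {n m k : ℕ} {K : Type*} [Field K] {hkm : k ≤ m} {q : Fin m → Fin n → ℤ}
  {e e1 e2 : Fin k → Fin n → ℤ} {u : Fin n → ℤ}

local notation "⟪" r ", " u "⟫" => pairZ (q (Fin.castLE hkm r)) u

lemma Compatible.pairZ_add_sum_smul (he : Compatible hkm q e) (u : Fin n → ℤ) (c : Fin k → ℤ)
    (s : Fin k) : ⟪s, u + ∑ r, c r • e r⟫ = ⟪s, u⟫ - c s := by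
  have hes : ∀ r, q (Fin.castLE hkm s) ⬝ᵥ e r = if r = s then -1 else 0 := fun r => he.1 r s
  simp only [pairZ_eq_dotProduct, dotProduct_add, dotProduct_sum, dotProduct_smul, hes,
    smul_eq_mul, mul_ite, mul_neg_one, mul_zero, sum_ite_eq', mem_univ, if_true, sub_eq_add_neg]

lemma InS.add_sum_smul (hu : InS q u) (he : Compatible hkm q e) {c : Fin k → ℤ}
    (hc₀ : ∀ r, 0 ≤ c r) (hc : ∀ r, c r ≤ ⟪r, u⟫) : InS q (u + ∑ r, c r • e r) := by
  intro j
  by_cases hj : (j : ℕ) < k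
  · have hqj : q j = q (Fin.castLE hkm ⟨j, hj⟩) := rfl
    rw [hqj, he.pairZ_add_sum_smul]
    exact sub_nonneg.2 (hc _)
  · simp only [pairZ_eq_dotProduct, dotProduct_add, dotProduct_sum, dotProduct_smul,
      smul_eq_mul]
    exact add_nonneg (hu j) (sum_nonneg fun r _ => mul_nonneg (hc₀ r) (he.2 r j (not_lt.1 hj)))

variable (hkm q) in
def faceProj (e : Fin k → Fin n → ℤ) (u : Fin n → ℤ) : Fin n → ℤ :=
  u + ∑ r, ⟪r, u⟫ • e r

lemma faceProj_add (e : Fin k → Fin n → ℤ) (u v : Fin n → ℤ) :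
    faceProj hkm q e (u + v) = faceProj hkm q e u + faceProj hkm q e v := by
  simp only [faceProj, pairZ_eq_dotProduct, dotProduct_add, add_smul, sum_add_distrib]
  abel

lemma faceProj_of_pairZ_eq_zero (h₀ : ∀ r, ⟪r, u⟫ = 0) : faceProj hkm q e u = u := by
  simp [faceProj, h₀]

lemma InS.faceProj (hu : InS q u) (he : Compatible hkm q e) : InS q (faceProj hkm q e u) :=
  hu.add_sum_smul he (fun _ => hu _) fun _ => le_rfl

variable (hkm q) in
def pointInv (e1 e2 : Fin k → Fin n → ℤ) (x : (Fin n → ℤ) → K) (u : Fin n → ℤ) : K :=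
  (-1) ^ (∑ r, ⟪r, u⟫.toNat) * x u * (x (faceProj hkm q e1 u))⁻¹ * (x (faceProj hkm q e2 u))⁻¹

lemma pointInv_comm (x : (Fin n → ℤ) → K) : pointInv hkm q e1 e2 x = pointInv hkm q e2 e1 x :=
  funext fun _ => mul_right_comm _ _ _

lemma isPoint_pointInv (he1 : Compatible hkm q e1) (he2 : Compatible hkm q e2)
    {x : (Fin n → ℤ) → K} (hx : IsPoint q x) : IsPoint q (pointInv hkm q e1 e2 x) := by
  refine ⟨by simp [pointInv, faceProj, pairZ_eq_dotProduct, hx.1], fun u v hu hv => ?_⟩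
  have hdeg : ∑ r, ⟪r, u + v⟫.toNat = ∑ r, ⟪r, u⟫.toNat + ∑ r, ⟪r, v⟫.toNat := by
    rw [← sum_add_distrib]
    refine sum_congr rfl fun r _ => ?_
    have hur := hu (Fin.castLE hkm r)
    have hvr := hv (Fin.castLE hkm r)
    simp only [pairZ_eq_dotProduct, dotProduct_add] at hur hvr ⊢
    omega
  simp only [pointInv, hdeg, pow_add, faceProj_add, hx.2 u v hu hv,
    hx.2 _ _ (hu.faceProj he1) (hv.faceProj he1), hx.2 _ _ (hu.faceProj he2) (hv.faceProj he2),
    mul_inv]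
  ring

lemma rmul_swap (hu : ∀ r, 0 ≤ ⟪r, u⟫) (x y : (Fin n → ℤ) → K) :
    rmul hkm q e1 e2 x y u = rmul hkm q e2 e1 y x u := by
  let flip : (Fin k → ℕ) → Fin k → ℕ := fun i r => ⟪r, u⟫.toNat - i r
  have hflip : ∀ i ∈ Fintype.piFinset (fun r => range (⟪r, u⟫.toNat + 1)),
      flip i ∈ Fintype.piFinset (fun r => range (⟪r, u⟫.toNat + 1)) ∧ flip (flip i) = i ∧
      ∀ r, ((flip i r : ℕ) : ℤ) = ⟪r, u⟫ - i r := by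
    intro i hi
    simp only [Fintype.mem_piFinset, mem_range, flip] at hi ⊢
    refine ⟨fun r => by omega, funext fun r => ?_, fun r => ?_⟩
    · have := hi r; omega
    · have := hi r; have := hu r; omega
  refine sum_nbij' flip flip (fun i hi => (hflip i hi).1) (fun i hi => (hflip i hi).1)
    (fun i hi => (hflip i hi).2.1) (fun i hi => (hflip i hi).2.1) fun i hi => ?_
  obtain ⟨-, -, hfi⟩ := hflip i hi
  have hchoose : ∀ r, ⟪r, u⟫.toNat.choose (flip i r) = ⟪r, u⟫.toNat.choose (i r) := fun r =>
    Nat.choose_symm (Nat.lt_succ_iff.1 (mem_range.1 (Fintype.mem_piFinset.1 hi r)))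
  simp only [hfi, hchoose, sub_sub_cancel]
  exact mul_right_comm _ _ _

lemma rmul_of_pairZ_eq_zero (h₀ : ∀ r, ⟪r, u⟫ = 0) (x y : (Fin n → ℤ) → K) :
    rmul hkm q e1 e2 x y u = x u * y u := by
  simp [rmul, h₀]

lemma rmul_pointInv_summand (he1 : Compatible hkm q e1) (he2 : Compatible hkm q e2)
    {x : (Fin n → ℤ) → K} (hx : IsPoint q x)
    (hxne : ∀ u, InS q u → (∀ r : Fin k, ⟪r, u⟫ = 0) → x u ≠ 0) (hu : InS q u)
    {i : Fin k → ℕ} (hi : ∀ r, i r ≤ ⟪r, u⟫.toNat) :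
    (∏ r, (⟪r, u⟫.toNat.choose (i r) : K)) * x (u + ∑ r, (i r : ℤ) • e2 r) *
        pointInv hkm q e1 e2 x (u + ∑ r, (⟪r, u⟫ - i r) • e1 r) =
      x u * (x (faceProj hkm q e1 u))⁻¹ * ∏ r, ((-1) ^ i r * (⟪r, u⟫.toNat.choose (i r) : K)) := by
  have hi' : ∀ r, (i r : ℤ) ≤ ⟪r, u⟫ := fun r => by
    have := hi r; have := hu (Fin.castLE hkm r); omega
  set A := u + ∑ r, (i r : ℤ) • e2 r with hA_def
  set B := u + ∑ r, (⟪r, u⟫ - i r) • e1 r with hB_def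
  have hA : InS q A := hu.add_sum_smul he2 (fun r => by positivity) hi'
  have hB : InS q B := hu.add_sum_smul he1 (fun r => sub_nonneg.2 (hi' r))
    fun r => sub_le_self _ (by positivity)
  have hB_deg : ∀ r, ⟪r, B⟫ = i r := fun r => by rw [hB_def, he1.pairZ_add_sum_smul]; ring
  have hB_proj : faceProj hkm q e1 B = faceProj hkm q e1 u := by
    simp only [faceProj, hB_deg]
    rw [hB_def, add_assoc, ← sum_add_distrib]
    simp only [← add_smul, sub_add_cancel]
  have hC : InS q (faceProj hkm q e2 B) := hB.faceProj he2
  have hC_deg : ∀ r, ⟪r, faceProj hkm q e2 B⟫ = 0 := fun r => by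
    rw [faceProj, he2.pairZ_add_sum_smul, sub_self]
  have hAB : x A * x B = x u * x (faceProj hkm q e2 B) := by
    rw [← hx.2 A B hA hB, ← hx.2 u _ hu hC]
    congr 1
    simp only [faceProj, hB_deg, hA_def]
    abel
  have key : x A * x B * (x (faceProj hkm q e2 B))⁻¹ = x u := by
    rw [hAB, mul_inv_cancel_right₀ (hxne _ hC hC_deg)]
  simp only [pointInv, hB_deg, Int.toNat_natCast, hB_proj, prod_mul_distrib, prod_pow_eq_pow_sum]
  linear_combination
    (∏ r, (⟪r, u⟫.toNat.choose (i r) : K)) * (-1) ^ (∑ r, i r) * (x (faceProj hkm q e1 u))⁻¹ * key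

lemma rmul_pointInv (he1 : Compatible hkm q e1) (he2 : Compatible hkm q e2)
    {x : (Fin n → ℤ) → K} (hx : IsPoint q x)
    (hxne : ∀ u, InS q u → (∀ r : Fin k, ⟪r, u⟫ = 0) → x u ≠ 0) (hu : InS q u) :
    rmul hkm q e1 e2 x (pointInv hkm q e1 e2 x) u = xtau K hkm q u := by
  have htoNat : ∀ r, ⟪r, u⟫.toNat = 0 ↔ ⟪r, u⟫ = 0 := fun r => by
    have := hu (Fin.castLE hkm r); omega
  rw [rmul, sum_congr rfl fun i hi => rmul_pointInv_summand he1 he2 hx hxne hu fun r =>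
      Nat.lt_succ_iff.1 (mem_range.1 (Fintype.mem_piFinset.1 hi r)), ← mul_sum,
    ← prod_univ_sum (fun r => range (⟪r, u⟫.toNat + 1))
      fun r j => (-1) ^ j * (⟪r, u⟫.toNat.choose j : K)]
  simp only [sum_range_neg_one_pow_mul_choose, Fintype.prod_boole, htoNat, xtau]
  by_cases h₀ : ∀ r, ⟪r, u⟫ = 0
  · rw [if_pos h₀, if_pos h₀, faceProj_of_pairZ_eq_zero h₀, mul_inv_cancel₀ (hxne u hu h₀), one_mul]
  · rw [if_neg h₀, if_neg h₀, mul_zero]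

end

theorem statement_4_general {n m k : ℕ} {K : Type*} [Field K]
    (hkm : k ≤ m)
    (q : Fin m → Fin n → ℤ) (e1 e2 : Fin k → Fin n → ℤ)
    (he1 : Compatible hkm q e1) (he2 : Compatible hkm q e2)
    (x : (Fin n → ℤ) → K) (hx : IsPoint q x) :
    (∃ y : (Fin n → ℤ) → K, IsPoint q y ∧ ∀ u : Fin n → ℤ, InS q u →
        rmul hkm q e1 e2 x y u = xtau K hkm q u ∧
        rmul hkm q e1 e2 y x u = xtau K hkm q u) ↔
    (∀ u : Fin n → ℤ, InS q u →
        (∀ r : Fin k, pairZ (q (Fin.castLE hkm r)) u = 0) → x u ≠ 0) := by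
  constructor
  · rintro ⟨y, -, hxy⟩ u hu h₀
    have hunit := (hxy u hu).1
    rw [rmul_of_pairZ_eq_zero h₀, xtau, if_pos h₀] at hunit
    exact left_ne_zero_of_mul_eq_one hunit
  · intro hxne
    refine ⟨pointInv hkm q e1 e2 x, isPoint_pointInv he1 he2 hx, fun u hu =>
      ⟨rmul_pointInv he1 he2 hx hxne hu, ?_⟩⟩
    rw [rmul_swap fun r => hu _, pointInv_comm]
    exact rmul_pointInv he2 he1 hx hxne hu

theorem statement_4 {n m k : ℕ} {K : Type*} [Field K] [CharZero K]
    (hn : 1 ≤ n) (hk : 1 ≤ k) (hkm : k ≤ m)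
    (q : Fin m → Fin n → ℤ) (e1 e2 : Fin k → Fin n → ℤ)
    (he1 : Compatible hkm q e1) (he2 : Compatible hkm q e2)
    (hface : ∃ v : Fin n → ℤ, (∀ r : Fin k, pairZ (q (Fin.castLE hkm r)) v = 0) ∧
      ∀ j : Fin m, k ≤ (j : ℕ) → 0 < pairZ (q j) v)
    (x : (Fin n → ℤ) → K) (hx : IsPoint q x) :
    (∃ y : (Fin n → ℤ) → K, IsPoint q y ∧ ∀ u : Fin n → ℤ, InS q u →
        rmul hkm q e1 e2 x y u = xtau K hkm q u ∧
        rmul hkm q e1 e2 y x u = xtau K hkm q u) ↔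
    (∀ u : Fin n → ℤ, InS q u →
        (∀ r : Fin k, pairZ (q (Fin.castLE hkm r)) u = 0) → x u ≠ 0) :=
  statement_4_general hkm q e1 e2 he1 he2 x hx
end

section
/- Assume for each r ≤ k there exists u_r ∈ S with ⟨p_s, u_r⟩ = δ_{sr} for all s ≤ k. Then the operation * is commutative (x*y = y*x for all points x, y) if and only if e_1^{(r)} = e_2^{(r)} for all r = 1, …, k. (This is the Remark after Theorem 4.2: a root monoid is commutative if and only if the two Demazure roots in each pair coincide.) -/
open Finset

/-!
If `e₁ = e₂`, the reflection `i ↦ ⟨p, u⟩ - i` of the summation box exchanges the roles of `x`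
and `y` in `x * y` (the binomial coefficients are symmetric). Conversely, at the point `u_r` the
sum defining `x * y` has only two terms, `x(u) y(u + e₁) + x(u + e₂) y(u)`; taking `x = 1` and
the character `y(v) = 2 ^ vᵢ`, commutativity forces `(e₁)ᵢ = (e₂)ᵢ`.
-/

theorem Fintype.mem_piFinset_range_succ_iff {ι : Type*} [Fintype ι] [DecidableEq ι]
    {d i : ι → ℕ} : i ∈ piFinset (fun r => range (d r + 1)) ↔ i ≤ d := by
  simp only [mem_piFinset, mem_range, Nat.lt_succ_iff, Pi.le_def]

theorem Finset.sum_piFinset_range_reflect {ι M : Type*} [Fintype ι] [DecidableEq ι]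
    [AddCommMonoid M] (d : ι → ℕ) (f : (ι → ℕ) → M) :
    ∑ i ∈ Fintype.piFinset (fun r => range (d r + 1)), f (d - i) =
      ∑ i ∈ Fintype.piFinset (fun r => range (d r + 1)), f i := by
  have reflect_mem : ∀ i ∈ Fintype.piFinset (fun r => range (d r + 1)),
      d - i ∈ Fintype.piFinset (fun r => range (d r + 1)) := fun _ _ =>
    Fintype.mem_piFinset_range_succ_iff.mpr tsub_le_self
  have reflect_reflect : ∀ i ∈ Fintype.piFinset (fun r => range (d r + 1)), d - (d - i) = i :=
    fun _ hi => tsub_tsub_cancel_of_le (Fintype.mem_piFinset_range_succ_iff.mp hi)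
  exact sum_nbij' (d - ·) (d - ·) reflect_mem reflect_mem reflect_reflect reflect_reflect
    fun _ _ => rfl

theorem Fintype.piFinset_range_single_succ {ι : Type*} [Fintype ι] [DecidableEq ι] (r : ι) :
    piFinset (fun s => range ((Pi.single r 1 : ι → ℕ) s + 1)) = {0, Pi.single r 1} := by
  ext i
  rw [mem_piFinset_range_succ_iff, mem_insert, mem_singleton]
  constructor
  · intro hi
    have hsingle : i = Pi.single r (i r) := funext fun s => by
      rcases eq_or_ne s r with rfl | hs
      · simp
      · simpa [hs] using hi s
    rcases Nat.le_one_iff_eq_zero_or_eq_one.mp (by simpa using hi r) with h | h <;>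
      rw [hsingle, h] <;> simp
  · rintro (rfl | rfl)
    exacts [fun _ => Nat.zero_le _, le_rfl]

theorem two_zpow_injective {K : Type*} [Field K] [CharZero K] :
    Function.Injective fun a : ℤ => (2 : K) ^ a := by
  intro a b h
  have hq : ((2 ^ a : ℚ) : K) = ((2 ^ b : ℚ) : K) := by push_cast; exact h
  exact zpow_right_injective₀ (by norm_num) (by norm_num) (Rat.cast_injective hq)

section

variable {n m k : ℕ} {K : Type*} [Field K] (hkm : k ≤ m) (q : Fin m → Fin n → ℤ)

theorem rmul_comm (e : Fin k → Fin n → ℤ) (x y : (Fin n → ℤ) → K) {u : Fin n → ℤ}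
    (hu : ∀ r : Fin k, 0 ≤ pairZ (q (Fin.castLE hkm r)) u) :
    rmul hkm q e e x y u = rmul hkm q e e y x u := by
  refine (Finset.sum_piFinset_range_reflect (fun r => (pairZ (q (Fin.castLE hkm r)) u).toNat) _
    ).symm.trans (sum_congr rfl fun i hi => ?_)
  have hid := Fintype.mem_piFinset_range_succ_iff.mp hi
  have hcast : ∀ r, (((pairZ (q (Fin.castLE hkm r)) u).toNat - i r : ℕ) : ℤ) =
      pairZ (q (Fin.castLE hkm r)) u - i r := fun r => by
    rw [Nat.cast_sub (hid r), Int.toNat_of_nonneg (hu r)]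
  simp only [Pi.sub_apply, hcast, sub_sub_cancel, Nat.choose_symm (hid _)]
  ring

theorem rmul_of_pairZ_eq_single (e1 e2 : Fin k → Fin n → ℤ) (x y : (Fin n → ℤ) → K)
    {u : Fin n → ℤ} (r : Fin k)
    (hu : ∀ s : Fin k, pairZ (q (Fin.castLE hkm s)) u = if s = r then 1 else 0) :
    rmul hkm q e1 e2 x y u = x u * y (u + e1 r) + x (u + e2 r) * y u := by
  have hu' : ∀ s, pairZ (q (Fin.castLE hkm s)) u = ((Pi.single r 1 : Fin k → ℕ) s : ℤ) :=
    fun s => by rw [hu, Pi.single_apply]; split_ifs <;> rfl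
  have hne : (0 : Fin k → ℕ) ≠ Pi.single r 1 := fun h => by simpa using congrFun h r
  simp only [rmul, hu', Int.toNat_natCast, Fintype.piFinset_range_single_succ, sum_pair hne]
  simp [Pi.single_apply]

theorem isPoint_const_one : IsPoint q (fun _ => (1 : K)) :=
  ⟨rfl, fun _ _ _ _ => (mul_one 1).symm⟩

theorem isPoint_zpow_apply {c : K} (hc : c ≠ 0) (i : Fin n) : IsPoint q (fun v => c ^ v i) :=
  ⟨zpow_zero c, fun _ _ _ _ => zpow_add₀ hc _ _⟩

end

theorem statement_7_general {n m k : ℕ} {K : Type*} [Field K] [CharZero K]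
    (hkm : k ≤ m)
    (q : Fin m → Fin n → ℤ) (e1 e2 : Fin k → Fin n → ℤ)
    (hur : ∀ r : Fin k, ∃ u : Fin n → ℤ, InS q u ∧
      ∀ s : Fin k, pairZ (q (Fin.castLE hkm s)) u = if s = r then 1 else 0) :
    (∀ x y : (Fin n → ℤ) → K, IsPoint q x → IsPoint q y →
      ∀ u : Fin n → ℤ, InS q u →
        rmul hkm q e1 e2 x y u = rmul hkm q e1 e2 y x u) ↔
    (∀ r : Fin k, e1 r = e2 r) := by
  constructor
  · intro hcomm r
    obtain ⟨u, huS, hu⟩ := hur r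
    funext i
    have h := hcomm _ _ (isPoint_const_one q) (isPoint_zpow_apply q two_ne_zero i) u huS
    rw [rmul_of_pairZ_eq_single hkm q e1 e2 _ _ r hu,
      rmul_of_pairZ_eq_single hkm q e1 e2 _ _ r hu] at h
    have h2 : (2 : K) ^ (u + e1 r) i = 2 ^ (u + e2 r) i := by linear_combination h
    simpa using two_zpow_injective h2
  · rintro h x y - - u hu
    obtain rfl : e1 = e2 := funext h
    exact rmul_comm hkm q e1 x y fun s => hu _

theorem statement_7 {n m k : ℕ} {K : Type*} [Field K] [CharZero K]
    (hn : 1 ≤ n) (hk : 1 ≤ k) (hkm : k ≤ m)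
    (q : Fin m → Fin n → ℤ) (e1 e2 : Fin k → Fin n → ℤ)
    (he1 : Compatible hkm q e1) (he2 : Compatible hkm q e2)
    (hur : ∀ r : Fin k, ∃ u : Fin n → ℤ, InS q u ∧
      ∀ s : Fin k, pairZ (q (Fin.castLE hkm s)) u = if s = r then 1 else 0) :
    (∀ x y : (Fin n → ℤ) → K, IsPoint q x → IsPoint q y →
      ∀ u : Fin n → ℤ, InS q u →
        rmul hkm q e1 e2 x y u = rmul hkm q e1 e2 y x u) ↔
    (∀ r : Fin k, e1 r = e2 r) :=
  statement_7_general hkm q e1 e2 hur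
end

section
/- Let K be a field of characteristic zero and let L be a Lie algebra over K which is a free K-module with basis e_1, …, e_k. Let χ_1, …, χ_k ∈ ℤ^m be vectors that are linearly independent over ℚ. Suppose that for every t = (t_1, …, t_m) ∈ (Kˣ)^m the K-linear automorphism A_t of L determined by A_t(e_i) = (∏_{j=1}^m t_j^{(χ_i)_j}) · e_i preserves the Lie bracket, i.e. A_t[x, y] = [A_t x, A_t y] for all x, y ∈ L. Then L is abelian: [x, y] = 0 for all x, y ∈ L. (This is the Lie-algebra core of Lemma 5.2: the unipotent radical of an active semidirect product U ⋊ T is commutative, so U ≅ 𝔾_a^k.) -/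
/-!
`A_t` multiplies `e_i` by the character value `t ^ χ_i`, so, being a Lie algebra automorphism, it
multiplies `[e_i, e_j]` by `t ^ (χ_i + χ_j)`; hence the `e_l`-coordinate of `[e_i, e_j]` vanishes
unless `t ^ χ_l = t ^ (χ_i + χ_j)` for all `t`. Linear independence of the `χ`'s rules out
`χ_l = χ_i + χ_j`, and since `n ↦ 2 ^ n` is injective in characteristic zero, a torus element with a
single coordinate equal to `2` already separates the two characters.
-/

open Finset

theorem LinearIndependent.apply_ne_add_apply {R V ι : Type*} [Ring R] [Nontrivial R]
    [AddCommGroup V] [Module R V] {v : ι → V} (hv : LinearIndependent R v) (i j l : ι) :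
    v l ≠ v i + v j := by
  intro h
  have hsingle : Finsupp.single l (1 : R) = Finsupp.single i 1 + Finsupp.single j 1 :=
    hv (by simpa using h)
  -- the coefficient sums of the two sides are `1` and `2`
  have := congrArg (Finsupp.linearCombination R fun _ => (1 : R)) hsingle
  simp at this

theorem zpow_right_injective_two (K : Type*) [DivisionRing K] [CharZero K] :
    Function.Injective fun n : ℤ => (2 : K) ^ n := by
  intro a b hab
  have : (((2 : ℚ) ^ a : ℚ) : K) = ((2 : ℚ) ^ b : ℚ) := by push_cast; exact hab
  exact zpow_right_injective₀ (a := (2 : ℚ)) (by norm_num) (by norm_num) (Rat.cast_injective this)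

namespace Module.Basis

variable {R ι : Type*} [CommRing R] {c : ι → R}

theorem repr_apply_of_eq_smul {M : Type*} [AddCommGroup M] [Module R M] (b : Basis ι R M)
    {A : M →ₗ[R] M} (hA : ∀ a, A (b a) = c a • b a) (z : M) (l : ι) :
    b.repr (A z) l = c l * b.repr z l := by
  have : Finsupp.lapply l ∘ₗ b.repr.toLinearMap ∘ₗ A =
      c l • (Finsupp.lapply l ∘ₗ b.repr.toLinearMap) :=
    b.ext fun a => by
      by_cases hal : a = l
      · subst hal; simp [hA]
      · simp [hA, hal]
  exact LinearMap.congr_fun this z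

variable {L : Type*} [LieRing L] [LieAlgebra R L] (b : Basis ι R L)

theorem repr_lie_eq_zero_of_ne_mul [NoZeroDivisors R] {A : L →ₗ[R] L}
    (hA : ∀ a, A (b a) = c a • b a) {i j l : ι} (hij : A ⁅b i, b j⁆ = ⁅A (b i), A (b j)⁆)
    (hne : c l ≠ c i * c j) : b.repr ⁅b i, b j⁆ l = 0 := by
  have hl := congrArg (b.repr · l) hij
  rw [hA, hA, smul_lie, lie_smul, smul_smul] at hl
  simp only [b.repr_apply_of_eq_smul hA, map_smul, Finsupp.smul_apply, smul_eq_mul] at hl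
  by_contra hr
  exact hne (mul_right_cancel₀ hr hl)

theorem isLieAbelian_of_lie_eq_zero (hb : ∀ i j, ⁅b i, b j⁆ = 0) : IsLieAbelian L := by
  have : (LieAlgebra.ad R L : L →ₗ[R] Module.End R L) = 0 := LinearMap.ext_basis b b hb
  exact ⟨fun x y => LinearMap.congr_fun (LinearMap.congr_fun this x) y⟩

end Module.Basis

theorem statement_8 {K : Type*} [Field K] [CharZero K] {k m : ℕ}
    {L : Type*} [LieRing L] [LieAlgebra K L]
    (b : Module.Basis (Fin k) K L)
    (χ : Fin k → Fin m → ℤ)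
    (hχ : LinearIndependent ℚ fun i : Fin k => fun j : Fin m => ((χ i j : ℚ)))
    (h : ∀ (t : Fin m → Kˣ) (A : L →ₗ[K] L),
      (∀ i : Fin k, A (b i) = (∏ j : Fin m, ((t j : K) ^ (χ i j))) • b i) →
      ∀ x y : L, A ⁅x, y⁆ = ⁅A x, A y⁆) :
    ∀ x y : L, ⁅x, y⁆ = 0 := by
  have hbasis : ∀ i j, ⁅b i, b j⁆ = 0 := by
    intro i j
    refine b.repr.injective (Finsupp.ext fun l => ?_)
    obtain ⟨s, hs⟩ : ∃ s, χ l s ≠ χ i s + χ j s := by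
      by_contra! hχl
      exact hχ.apply_ne_add_apply i j l (funext fun s => by simp [hχl s])
    let t : Fin m → Kˣ := Pi.mulSingle s (Units.mk0 2 two_ne_zero)
    let c a : K := 2 ^ χ a s
    have htc : ∀ a, ∏ s', (t s' : K) ^ χ a s' = c a := fun a => by
      rw [prod_eq_single s (fun s' _ hs' => by simp [t, hs']) (by simp)]
      simp [t, c]
    have hA : ∀ a, b.constr K (fun a => c a • b a) (b a) = c a • b a := b.constr_basis K _
    refine (b.repr_lie_eq_zero_of_ne_mul hA (h t _ (fun a => by rw [htc, hA]) _ _) ?_).trans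
      (by simp)
    rw [← zpow_add₀ two_ne_zero]
    exact (zpow_right_injective_two K).ne hs
  have := b.isLieAbelian_of_lie_eq_zero hbasis
  exact trivial_lie_zero L L
end

section
/- Let K be a field of characteristic zero and let n ≥ k ≥ 0 be integers. For each r = 1, …, k fix nonnegative integers a_i^{(r)} and b_i^{(r)} for i = k+1, …, n. Define an operation * on K^n by: (x*y)_r = x_r · ∏_{i=k+1}^n y_i^{a_i^{(r)}} + y_r · ∏_{i=k+1}^n x_i^{b_i^{(r)}} for r = 1, …, k, and (x*y)_i = x_i · y_i for i = k+1, …, n. Then (K^n, *) is a monoid: * is associative and the element e with e_r = 0 for r ≤ k and e_i = 1 for i > k is a two-sided identity; moreover, the invertible elements of this monoid are exactly the x ∈ K^n with x_i ≠ 0 for all i = k+1, …, n. (This is the description of all root-monoid structures on affine space 𝔸^n from Section 6.1.) -/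
/-!
The coordinates `i ≥ k` form a torus `(Kˣ)^{n-k}` acting through the characters
`χ_c(x) = ∏_{i ≥ k} x_i ^ c_i`, and these characters are multiplicative for `*`. Hence
`(x * y)_r = x_r χ_a(y) + y_r χ_b(x)` is a twisted sum, associativity is a ring identity, and
`x` is inverted by `x_i ↦ x_i⁻¹` on the torus and `x_r ↦ -x_r χ_a(x)⁻¹ χ_b(x)⁻¹` on the
additive coordinates.
-/

open Finset

namespace RootMonoid

variable {R : Type*} {n k : ℕ}

def torusChar [CommMonoid R] (k : ℕ) (c : Fin n → ℕ) (x : Fin n → R) : R :=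
  ∏ j ∈ univ.filter fun j : Fin n => k ≤ (j : ℕ), x j ^ c j

def rootMul [CommSemiring R] (k : ℕ) (a b : Fin k → Fin n → ℕ) (x y : Fin n → R) :
    Fin n → R := fun i =>
  if h : (i : ℕ) < k then
    x i * torusChar k (a ⟨i, h⟩) y + y i * torusChar k (b ⟨i, h⟩) x
  else x i * y i

def rootOne [CommSemiring R] (k : ℕ) : Fin n → R := fun i => if (i : ℕ) < k then 0 else 1

def rootInv [Field R] (k : ℕ) (a b : Fin k → Fin n → ℕ) (x : Fin n → R) : Fin n → R :=
  fun i =>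
    if h : (i : ℕ) < k then
      -x i * (torusChar k (a ⟨i, h⟩) x)⁻¹ * (torusChar k (b ⟨i, h⟩) x)⁻¹
    else (x i)⁻¹

section CommSemiring

variable [CommSemiring R] (a b : Fin k → Fin n → ℕ)

theorem rootMul_apply_of_le (x y : Fin n → R) {i : Fin n} (hi : k ≤ (i : ℕ)) :
    rootMul k a b x y i = x i * y i :=
  dif_neg hi.not_gt

theorem rootOne_apply_of_le {i : Fin n} (hi : k ≤ (i : ℕ)) : rootOne k i = (1 : R) :=
  if_neg hi.not_gt

theorem torusChar_rootMul (c : Fin n → ℕ) (x y : Fin n → R) :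
    torusChar k c (rootMul k a b x y) = torusChar k c x * torusChar k c y := by
  rw [torusChar, torusChar, torusChar, ← prod_mul_distrib]
  refine prod_congr rfl fun j hj => ?_
  rw [rootMul_apply_of_le a b x y (mem_filter.mp hj).2, mul_pow]

theorem torusChar_rootOne (c : Fin n → ℕ) : torusChar k c (rootOne k : Fin n → R) = 1 :=
  prod_eq_one fun j hj => by rw [rootOne_apply_of_le (mem_filter.mp hj).2, one_pow]

theorem rootMul_assoc (x y z : Fin n → R) :
    rootMul k a b (rootMul k a b x y) z = rootMul k a b x (rootMul k a b y z) := by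
  funext i
  by_cases h : (i : ℕ) < k
  · simp only [rootMul, dif_pos h, torusChar_rootMul]
    ring
  · simp only [rootMul, dif_neg h]
    ring

theorem rootOne_rootMul (x : Fin n → R) : rootMul k a b (rootOne k) x = x := by
  funext i
  by_cases h : (i : ℕ) < k
  · simp only [rootMul, rootOne, dif_pos h, if_pos h, torusChar_rootOne]
    ring
  · simp only [rootMul, rootOne, dif_neg h, if_neg h, one_mul]

theorem rootMul_rootOne (x : Fin n → R) : rootMul k a b x (rootOne k) = x := by
  funext i
  by_cases h : (i : ℕ) < k
  · simp only [rootMul, rootOne, dif_pos h, if_pos h, torusChar_rootOne]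
    ring
  · simp only [rootMul, rootOne, dif_neg h, if_neg h, mul_one]

theorem ne_zero_of_rootMul_eq_rootOne [Nontrivial R] {x y : Fin n → R}
    (hxy : rootMul k a b x y = rootOne k) {i : Fin n} (hi : k ≤ (i : ℕ)) : x i ≠ 0 := by
  have hi1 := congrFun hxy i
  rw [rootMul_apply_of_le a b x y hi, rootOne_apply_of_le hi] at hi1
  exact left_ne_zero_of_mul_eq_one hi1

end CommSemiring

section Field

variable [Field R] (a b : Fin k → Fin n → ℕ) {x : Fin n → R}

theorem torusChar_rootInv (c : Fin n → ℕ) (x : Fin n → R) :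
    torusChar k c (rootInv k a b x) = (torusChar k c x)⁻¹ := by
  rw [torusChar, torusChar, ← prod_inv_distrib]
  refine prod_congr rfl fun j hj => ?_
  rw [rootInv, dif_neg (mem_filter.mp hj).2.not_gt, inv_pow]

theorem torusChar_ne_zero (hx : ∀ i : Fin n, k ≤ (i : ℕ) → x i ≠ 0) (c : Fin n → ℕ) :
    torusChar k c x ≠ 0 :=
  prod_ne_zero_iff.mpr fun j hj => pow_ne_zero _ (hx j (mem_filter.mp hj).2)

theorem rootMul_rootInv (hx : ∀ i : Fin n, k ≤ (i : ℕ) → x i ≠ 0) :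
    rootMul k a b x (rootInv k a b x) = rootOne k := by
  funext i
  by_cases h : (i : ℕ) < k
  · have hb := torusChar_ne_zero hx (b ⟨i, h⟩)
    simp only [rootMul, rootOne, dif_pos h, if_pos h, torusChar_rootInv, rootInv]
    field_simp
    ring
  · simp only [rootMul, rootOne, rootInv, dif_neg h, if_neg h]
    exact mul_inv_cancel₀ (hx i (not_lt.mp h))

theorem rootInv_rootMul (hx : ∀ i : Fin n, k ≤ (i : ℕ) → x i ≠ 0) :
    rootMul k a b (rootInv k a b x) x = rootOne k := by
  funext i
  by_cases h : (i : ℕ) < k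
  · have ha := torusChar_ne_zero hx (a ⟨i, h⟩)
    simp only [rootMul, rootOne, dif_pos h, if_pos h, torusChar_rootInv, rootInv]
    field_simp
    ring
  · simp only [rootMul, rootOne, rootInv, dif_neg h, if_neg h]
    exact inv_mul_cancel₀ (hx i (not_lt.mp h))

theorem exists_rootMul_eq_rootOne_iff (x : Fin n → R) :
    (∃ y, rootMul k a b x y = rootOne k ∧ rootMul k a b y x = rootOne k) ↔
      ∀ i : Fin n, k ≤ (i : ℕ) → x i ≠ 0 :=
  ⟨fun ⟨_, hxy, _⟩ _ hi => ne_zero_of_rootMul_eq_rootOne a b hxy hi,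
    fun hx => ⟨rootInv k a b x, rootMul_rootInv a b hx, rootInv_rootMul a b hx⟩⟩

end Field

end RootMonoid

open RootMonoid

theorem statement_18_general {K : Type*} [Field K] {n k : ℕ}
    (a b : Fin k → Fin n → ℕ)
    (mul : (Fin n → K) → (Fin n → K) → (Fin n → K))
    (hmul : ∀ (x y : Fin n → K) (i : Fin n),
      mul x y i =
        if h : (i : ℕ) < k then
          x i * (∏ j ∈ Finset.univ.filter fun j : Fin n => k ≤ (j : ℕ),
              y j ^ a (⟨(i : ℕ), h⟩ : Fin k) j)
            + y i * ∏ j ∈ Finset.univ.filter fun j : Fin n => k ≤ (j : ℕ),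
                x j ^ b (⟨(i : ℕ), h⟩ : Fin k) j
        else x i * y i)
    (e : Fin n → K) (he : ∀ i : Fin n, e i = if (i : ℕ) < k then 0 else 1) :
    (∀ x y z : Fin n → K, mul (mul x y) z = mul x (mul y z)) ∧
    (∀ x : Fin n → K, mul e x = x ∧ mul x e = x) ∧
    (∀ x : Fin n → K,
      (∃ y : Fin n → K, mul x y = e ∧ mul y x = e) ↔
        ∀ i : Fin n, k ≤ (i : ℕ) → x i ≠ 0) := by
  obtain rfl : mul = rootMul k a b := funext₂ fun x y => funext (hmul x y)
  obtain rfl : e = rootOne k := funext he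
  exact ⟨rootMul_assoc a b, fun x => ⟨rootOne_rootMul a b x, rootMul_rootOne a b x⟩,
    exists_rootMul_eq_rootOne_iff a b⟩

theorem statement_18 {K : Type*} [Field K] [CharZero K] {n k : ℕ} (hkn : k ≤ n)
    (a b : Fin k → Fin n → ℕ)
    (mul : (Fin n → K) → (Fin n → K) → (Fin n → K))
    (hmul : ∀ (x y : Fin n → K) (i : Fin n),
      mul x y i =
        if h : (i : ℕ) < k then
          x i * (∏ j ∈ Finset.univ.filter fun j : Fin n => k ≤ (j : ℕ),
              y j ^ a (⟨(i : ℕ), h⟩ : Fin k) j)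
            + y i * ∏ j ∈ Finset.univ.filter fun j : Fin n => k ≤ (j : ℕ),
                x j ^ b (⟨(i : ℕ), h⟩ : Fin k) j
        else x i * y i)
    (e : Fin n → K) (he : ∀ i : Fin n, e i = if (i : ℕ) < k then 0 else 1) :
    (∀ x y z : Fin n → K, mul (mul x y) z = mul x (mul y z)) ∧
    (∀ x : Fin n → K, mul e x = x ∧ mul x e = x) ∧
    (∀ x : Fin n → K,
      (∃ y : Fin n → K, mul x y = e ∧ mul y x = e) ↔
        ∀ i : Fin n, k ≤ (i : ℕ) → x i ≠ 0) :=
  statement_18_general a b mul hmul e he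
end

section
/- Let K be a field of characteristic zero, let a_1, a_2, c_1, c_2 be nonnegative integers and b_1, b_2, d_1, d_2 positive integers. Let X = {x ∈ K^5 : x_1·x_2 = x_4·x_5} (the product of the quadratic cone and the affine line). Define for x, y ∈ K^5 the element x*y ∈ K^5 by: (x*y)_1 = x_1 y_3^{a_1} y_4^{b_1} + y_1 x_3^{a_2} x_4^{b_2}; (x*y)_2 = x_2 y_3^{c_1} y_4^{d_1} + y_2 x_3^{c_2} x_4^{d_2}; (x*y)_3 = x_3 y_3; (x*y)_4 = x_4 y_4; (x*y)_5 = x_5 y_3^{a_1+c_1} y_4^{b_1+d_1−1} + y_5 x_3^{a_2+c_2} x_4^{b_2+d_2−1} + x_1 x_3^{c_2} x_4^{d_2−1} y_2 y_3^{a_1} y_4^{b_1−1} + y_1 y_3^{c_1} y_4^{d_1−1} x_2 x_3^{a_2} x_4^{b_2−1}. Then: (a) if x, y ∈ X then x*y ∈ X; (b) * is associative on X; (c) the element (0, 0, 1, 1, 0) ∈ X is a two-sided identity for *. (This is the root-monoid structure on the cylinder over a quadratic cone from Example 6.2.) -/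
/-!
Every claim is a polynomial identity in the coordinates. Associativity and the unit laws hold
on all of `R⁵`; only closure uses the cone, since `(x*y)₁(x*y)₂ - (x*y)₄(x*y)₅` is a polynomial
combination of `x₁x₂ - x₄x₅` and `y₁y₂ - y₄y₅`. Positivity of `b, d` is what makes the truncated
natural-number exponents `b - 1`, `d - 1` in the fifth coordinate the genuine ones.
-/

namespace QuadraticConeCylinder

variable {R : Type*} [CommRing R] (a₁ a₂ c₁ c₂ : ℕ) {b₁ b₂ d₁ d₂ : ℕ}

/-- Coordinates are indexed from `0`, so `x i` is the paper's `x_{i+1}`. -/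
def cone : Set (Fin 5 → R) := {x | x 0 * x 1 = x 3 * x 4}

variable (b₁ b₂ d₁ d₂) in
def rootMul (x y : Fin 5 → R) : Fin 5 → R :=
  ![x 0 * y 2 ^ a₁ * y 3 ^ b₁ + y 0 * x 2 ^ a₂ * x 3 ^ b₂,
    x 1 * y 2 ^ c₁ * y 3 ^ d₁ + y 1 * x 2 ^ c₂ * x 3 ^ d₂,
    x 2 * y 2,
    x 3 * y 3,
    x 4 * y 2 ^ (a₁ + c₁) * y 3 ^ (b₁ + d₁ - 1)
      + y 4 * x 2 ^ (a₂ + c₂) * x 3 ^ (b₂ + d₂ - 1)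
      + x 0 * x 2 ^ c₂ * x 3 ^ (d₂ - 1) * y 1 * y 2 ^ a₁ * y 3 ^ (b₁ - 1)
      + y 0 * y 2 ^ c₁ * y 3 ^ (d₁ - 1) * x 1 * x 2 ^ a₂ * x 3 ^ (b₂ - 1)]

def rootOne : Fin 5 → R := ![0, 0, 1, 1, 0]

theorem rootOne_mem_cone : (rootOne : Fin 5 → R) ∈ cone := by
  simp [cone, rootOne]

theorem rootMul_mem_cone (hb₁ : 0 < b₁) (hb₂ : 0 < b₂) (hd₁ : 0 < d₁) (hd₂ : 0 < d₂)
    {x y : Fin 5 → R} (hx : x ∈ cone) (hy : y ∈ cone) :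
    rootMul a₁ a₂ c₁ c₂ b₁ b₂ d₁ d₂ x y ∈ cone := by
  obtain ⟨b₁, rfl⟩ := Nat.exists_eq_add_one_of_ne_zero hb₁.ne'
  obtain ⟨b₂, rfl⟩ := Nat.exists_eq_add_one_of_ne_zero hb₂.ne'
  obtain ⟨d₁, rfl⟩ := Nat.exists_eq_add_one_of_ne_zero hd₁.ne'
  obtain ⟨d₂, rfl⟩ := Nat.exists_eq_add_one_of_ne_zero hd₂.ne'
  simp only [cone, Set.mem_ofPred_eq, rootMul, ← add_assoc, Nat.add_sub_cancel, Fin.isValue,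
    Matrix.cons_val_zero, Matrix.cons_val_one, Matrix.cons_val] at *
  linear_combination (y 3 ^ 2 * y 2 ^ a₁ * y 2 ^ c₁ * y 3 ^ b₁ * y 3 ^ d₁) * hx
      + (x 3 ^ 2 * x 2 ^ a₂ * x 2 ^ c₂ * x 3 ^ b₂ * x 3 ^ d₂) * hy

theorem rootMul_assoc (hb₁ : 0 < b₁) (hb₂ : 0 < b₂) (hd₁ : 0 < d₁) (hd₂ : 0 < d₂)
    (x y z : Fin 5 → R) :
    rootMul a₁ a₂ c₁ c₂ b₁ b₂ d₁ d₂ (rootMul a₁ a₂ c₁ c₂ b₁ b₂ d₁ d₂ x y) z =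
      rootMul a₁ a₂ c₁ c₂ b₁ b₂ d₁ d₂ x (rootMul a₁ a₂ c₁ c₂ b₁ b₂ d₁ d₂ y z) := by
  obtain ⟨b₁, rfl⟩ := Nat.exists_eq_add_one_of_ne_zero hb₁.ne'
  obtain ⟨b₂, rfl⟩ := Nat.exists_eq_add_one_of_ne_zero hb₂.ne'
  obtain ⟨d₁, rfl⟩ := Nat.exists_eq_add_one_of_ne_zero hd₁.ne'
  obtain ⟨d₂, rfl⟩ := Nat.exists_eq_add_one_of_ne_zero hd₂.ne'
  ext i
  fin_cases i <;> simp [rootMul, ← add_assoc] <;> ring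

variable (b₁ b₂ d₁ d₂)

theorem rootOne_rootMul (x : Fin 5 → R) : rootMul a₁ a₂ c₁ c₂ b₁ b₂ d₁ d₂ rootOne x = x := by
  ext i
  fin_cases i <;> simp [rootMul, rootOne]

theorem rootMul_rootOne (x : Fin 5 → R) : rootMul a₁ a₂ c₁ c₂ b₁ b₂ d₁ d₂ x rootOne = x := by
  ext i
  fin_cases i <;> simp [rootMul, rootOne]

end QuadraticConeCylinder

open QuadraticConeCylinder

open Finset

theorem statement_19_general {K : Type*} [Field K]
    (a1 a2 c1 c2 b1 b2 d1 d2 : ℕ)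
    (hb1 : 0 < b1) (hb2 : 0 < b2) (hd1 : 0 < d1) (hd2 : 0 < d2)
    (mul : (Fin 5 → K) → (Fin 5 → K) → (Fin 5 → K))
    (hmul : ∀ x y : Fin 5 → K,
      mul x y 0 = x 0 * y 2 ^ a1 * y 3 ^ b1 + y 0 * x 2 ^ a2 * x 3 ^ b2 ∧
      mul x y 1 = x 1 * y 2 ^ c1 * y 3 ^ d1 + y 1 * x 2 ^ c2 * x 3 ^ d2 ∧
      mul x y 2 = x 2 * y 2 ∧
      mul x y 3 = x 3 * y 3 ∧
      mul x y 4 = x 4 * y 2 ^ (a1 + c1) * y 3 ^ (b1 + d1 - 1)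
        + y 4 * x 2 ^ (a2 + c2) * x 3 ^ (b2 + d2 - 1)
        + x 0 * x 2 ^ c2 * x 3 ^ (d2 - 1) * y 1 * y 2 ^ a1 * y 3 ^ (b1 - 1)
        + y 0 * y 2 ^ c1 * y 3 ^ (d1 - 1) * x 1 * x 2 ^ a2 * x 3 ^ (b2 - 1)) :
    (∀ x y : Fin 5 → K, x 0 * x 1 = x 3 * x 4 → y 0 * y 1 = y 3 * y 4 →
      mul x y 0 * mul x y 1 = mul x y 3 * mul x y 4) ∧
    (∀ x y z : Fin 5 → K, x 0 * x 1 = x 3 * x 4 → y 0 * y 1 = y 3 * y 4 →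
      z 0 * z 1 = z 3 * z 4 → mul (mul x y) z = mul x (mul y z)) ∧
    (∀ e : Fin 5 → K, (e 0 = 0 ∧ e 1 = 0 ∧ e 2 = 1 ∧ e 3 = 1 ∧ e 4 = 0) →
      e 0 * e 1 = e 3 * e 4 ∧
      ∀ x : Fin 5 → K, x 0 * x 1 = x 3 * x 4 → mul e x = x ∧ mul x e = x) := by
  obtain rfl : mul = rootMul a1 a2 c1 c2 b1 b2 d1 d2 := by
    funext x y i
    obtain ⟨h0, h1, h2, h3, h4⟩ := hmul x y
    fin_cases i <;> simp [rootMul, h0, h1, h2, h3, h4]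
  refine ⟨fun x y hx hy ↦ rootMul_mem_cone a1 a2 c1 c2 hb1 hb2 hd1 hd2 hx hy,
    fun x y z _ _ _ ↦ rootMul_assoc a1 a2 c1 c2 hb1 hb2 hd1 hd2 x y z, ?_⟩
  rintro e ⟨he0, he1, he2, he3, he4⟩
  obtain rfl : e = rootOne := by
    funext i
    fin_cases i <;> simp [rootOne, he0, he1, he2, he3, he4]
  exact ⟨rootOne_mem_cone, fun x _ ↦
    ⟨rootOne_rootMul a1 a2 c1 c2 b1 b2 d1 d2 x, rootMul_rootOne a1 a2 c1 c2 b1 b2 d1 d2 x⟩⟩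

theorem statement_19 {K : Type*} [Field K] [CharZero K]
    (a1 a2 c1 c2 b1 b2 d1 d2 : ℕ)
    (hb1 : 0 < b1) (hb2 : 0 < b2) (hd1 : 0 < d1) (hd2 : 0 < d2)
    (mul : (Fin 5 → K) → (Fin 5 → K) → (Fin 5 → K))
    (hmul : ∀ x y : Fin 5 → K,
      mul x y 0 = x 0 * y 2 ^ a1 * y 3 ^ b1 + y 0 * x 2 ^ a2 * x 3 ^ b2 ∧
      mul x y 1 = x 1 * y 2 ^ c1 * y 3 ^ d1 + y 1 * x 2 ^ c2 * x 3 ^ d2 ∧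
      mul x y 2 = x 2 * y 2 ∧
      mul x y 3 = x 3 * y 3 ∧
      mul x y 4 = x 4 * y 2 ^ (a1 + c1) * y 3 ^ (b1 + d1 - 1)
        + y 4 * x 2 ^ (a2 + c2) * x 3 ^ (b2 + d2 - 1)
        + x 0 * x 2 ^ c2 * x 3 ^ (d2 - 1) * y 1 * y 2 ^ a1 * y 3 ^ (b1 - 1)
        + y 0 * y 2 ^ c1 * y 3 ^ (d1 - 1) * x 1 * x 2 ^ a2 * x 3 ^ (b2 - 1)) :
    (∀ x y : Fin 5 → K, x 0 * x 1 = x 3 * x 4 → y 0 * y 1 = y 3 * y 4 →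
      mul x y 0 * mul x y 1 = mul x y 3 * mul x y 4) ∧
    (∀ x y z : Fin 5 → K, x 0 * x 1 = x 3 * x 4 → y 0 * y 1 = y 3 * y 4 →
      z 0 * z 1 = z 3 * z 4 → mul (mul x y) z = mul x (mul y z)) ∧
    (∀ e : Fin 5 → K, (e 0 = 0 ∧ e 1 = 0 ∧ e 2 = 1 ∧ e 3 = 1 ∧ e 4 = 0) →
      e 0 * e 1 = e 3 * e 4 ∧
      ∀ x : Fin 5 → K, x 0 * x 1 = x 3 * x 4 → mul e x = x ∧ mul x e = x) :=
  statement_19_general a1 a2 c1 c2 b1 b2 d1 d2 hb1 hb2 hd1 hd2 mul hmul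
end
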